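/- The NSE admits the decomposition NSE = 2αr - α² - β², where α = σ_s/σ_o is the ratio of simulated to observed standard deviations, r is the Pearson correlation between simulation and observation, and β = (μ_s - μ_o)/σ_o is the normalized mean bias. -/

import Mathlib

/-!
Writing `Q - Q* = (Q - μ_s) - (Q* - μ_o) + (μ_s - μ_o)` and using that deviations from a mean sum
to zero, `Σ (Q - Q*)² = N (σ_s² + σ_o² - 2 cov(Q, Q*) + (μ_s - μ_o)²)`. Dividing by
`Σ (Q* - μ_o)² = N σ_o²` gives `1 - NSE = α² + 1 - 2αr + β²`.
-/

open Finset

theorem sum_sub_sum_div_card_eq_zero {ι K : Type*} [Field K] [CharZero K] (s : Finset ι)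
    (f : ι → K) : ∑ i ∈ s, (f i - (∑ j ∈ s, f j) / #s) = 0 := by
  rw [sum_sub_distrib, sum_const, nsmul_eq_mul, mul_div_cancel_of_imp', sub_self]
  intro hs
  simp [card_eq_zero.mp (Nat.cast_eq_zero.mp hs)]

theorem sum_sub_sq_eq_of_sum_sub_eq_zero {ι R : Type*} [CommRing R] {s : Finset ι}
    {f g : ι → R} {a b : R} (hf : ∑ i ∈ s, (f i - a) = 0) (hg : ∑ i ∈ s, (g i - b) = 0) :
    ∑ i ∈ s, (f i - g i) ^ 2 = ∑ i ∈ s, (f i - a) ^ 2 + ∑ i ∈ s, (g i - b) ^ 2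
      - 2 * ∑ i ∈ s, (f i - a) * (g i - b) + #s * (a - b) ^ 2 := by
  have expand : ∀ i, (f i - g i) ^ 2 = (f i - a) ^ 2 + (g i - b) ^ 2
      - 2 * ((f i - a) * (g i - b)) + (a - b) ^ 2 + 2 * (a - b) * (f i - a)
      - 2 * (a - b) * (g i - b) := fun i => by ring
  simp only [expand, sum_add_distrib, sum_sub_distrib, ← mul_sum, hf, hg, sum_const,
    nsmul_eq_mul]
  ring

theorem nse_decomposition_general (N : ℕ) (Q Qo : Fin N → ℝ)
    (μs μo σs σo r α β NSE : ℝ)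
    (hμs : μs = (∑ t, Q t) / N) (hμo : μo = (∑ t, Qo t) / N)
    (hσs : σs = Real.sqrt ((∑ t, (Q t - μs) ^ 2) / N))
    (hσo : σo = Real.sqrt ((∑ t, (Qo t - μo) ^ 2) / N))
    (hσspos : 0 < σs) (hσopos : 0 < σo)
    (hr : r = ((∑ t, (Q t - μs) * (Qo t - μo)) / N) / (σs * σo))
    (hα : α = σs / σo) (hβ : β = (μs - μo) / σo)
    (hNSE : NSE = 1 - (∑ t, (Q t - Qo t) ^ 2) / (∑ t, (Qo t - μo) ^ 2)) :
    NSE = 2 * α * r - α ^ 2 - β ^ 2 := by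
  set Ss := ∑ t, (Q t - μs) ^ 2
  set So := ∑ t, (Qo t - μo) ^ 2
  set C := ∑ t, (Q t - μs) * (Qo t - μo)
  obtain ⟨hSo, hN⟩ : So ≠ 0 ∧ (N : ℝ) ≠ 0 :=
    div_ne_zero_iff.mp (Real.sqrt_pos.mp (hσo ▸ hσopos)).ne'
  have hQ : ∑ t, (Q t - μs) = 0 := by simpa [hμs] using sum_sub_sum_div_card_eq_zero univ Q
  have hQo : ∑ t, (Qo t - μo) = 0 := by simpa [hμo] using sum_sub_sum_div_card_eq_zero univ Qo
  have hσs2 : σs ^ 2 = Ss / N := hσs ▸ Real.sq_sqrt (by positivity)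
  have hσo2 : σo ^ 2 = So / N := hσo ▸ Real.sq_sqrt (by positivity)
  have hSSE : ∑ t, (Q t - Qo t) ^ 2 = Ss + So - 2 * C + N * (μs - μo) ^ 2 := by
    simpa using sum_sub_sq_eq_of_sum_sub_eq_zero hQ hQo
  rw [hNSE, hSSE, hr, hα, hβ]
  field_simp
  rw [hσs2, hσo2]
  field_simp
  ring

/-- Gupta et al. (2009) decomposition: `NSE = 2αr - α² - β²`. -/
theorem nse_decomposition (N : ℕ) (hN : 2 ≤ N) (Q Qo : Fin N → ℝ)
    (μs μo σs σo r α β NSE : ℝ)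
    (hμs : μs = (∑ t, Q t) / N) (hμo : μo = (∑ t, Qo t) / N)
    (hσs : σs = Real.sqrt ((∑ t, (Q t - μs) ^ 2) / N))
    (hσo : σo = Real.sqrt ((∑ t, (Qo t - μo) ^ 2) / N))
    (hσspos : 0 < σs) (hσopos : 0 < σo)
    (hr : r = ((∑ t, (Q t - μs) * (Qo t - μo)) / N) / (σs * σo))
    (hα : α = σs / σo) (hβ : β = (μs - μo) / σo)
    (hNSE : NSE = 1 - (∑ t, (Q t - Qo t) ^ 2) / (∑ t, (Qo t - μo) ^ 2)) :
    NSE = 2 * α * r - α ^ 2 - β ^ 2 :=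
  nse_decomposition_general N Q Qo μs μo σs σo r α β NSE hμs hμo hσs hσo hσspos hσopos hr hα hβ hNSE
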